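/- arXiv:2305.09505 — 2 statements merged into one kernel-verified Lean document; each statement's English description precedes it below -/
import Mathlib

section
/- For α, α̃ ∈ L¹(X,ℝ) and any σ ∈ ℂ, |E^X_{α̃}(σ) − E^X_α(σ)| ≤ β_σ ‖α̃ − α‖₁ e^{max(‖α‖₁, ‖α̃‖₁)}, where β_σ = 1 if Im σ ≥ 0 and β_σ = e^{2|Im σ|(x₁−x₀)} otherwise. -/
open MeasureTheory Filter


/-- The alternating exponent term κ(s₁,…,s_j). -/
noncomputable def kappaFn (x0 : ℝ) (j : ℕ) (s : Fin j → ℝ) : ℝ :=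
  (∑ ν : Fin j, (-1 : ℝ) ^ (j - 1 - (ν : ℕ)) * s ν) - (if Odd j then x0 else 0)

/-- The ordered simplex {x₀ < s₁ < ⋯ < s_j < x₁}. -/
def simplexSet (x0 x1 : ℝ) (j : ℕ) : Set (Fin j → ℝ) :=
  {s | StrictMono s ∧ ∀ ν, s ν ∈ Set.Ioo x0 x1}

/-- The j-th term C_j(σ) of the harmonic exponential series. -/
noncomputable def Cterm (x0 x1 : ℝ) (α : ℝ → ℝ) (j : ℕ) (σ : ℂ) : ℂ :=
  ∫ s in simplexSet x0 x1 j,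
    Complex.exp (2 * Complex.I * σ * (kappaFn x0 j s : ℂ)) * ∏ ν : Fin j, (α (s ν) : ℂ)

/-- The harmonic exponential E^X_α(σ). -/
noncomputable def hexp (x0 x1 : ℝ) (α : ℝ → ℝ) (σ : ℂ) : ℂ :=
  1 + ∑' j : ℕ, Cterm x0 x1 α (j + 1) σ

/-- The L¹ norm of α on (x₀,x₁). -/
noncomputable def L1normOn (x0 x1 : ℝ) (α : ℝ → ℝ) : ℝ :=
  ∫ x in Set.Ioo x0 x1, |α x|

/-- β_σ = 1 if Im σ ≥ 0, else e^{2|Im σ|(x₁−x₀)}. -/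
noncomputable def betaSigma (x0 x1 : ℝ) (σ : ℂ) : ℝ :=
  if 0 ≤ σ.im then 1 else Real.exp (2 * |σ.im| * (x1 - x0))

/-!
On the ordered simplex `x₀ < s₁ < ⋯ < s_j < x₁` the alternating sum `κ` lies in `[0, x₁ - x₀]`,
so `‖e^{2iσκ}‖ ≤ β_σ`. Hence the `j`-th terms of `E_α̃` and `E_α` differ by at most `β_σ` times
the simplex integral of `|∏ α̃(s_ν) - ∏ α(s_ν)|`; this integrand is symmetric, so its simplex
integral is at most `1/j!` times its integral over the cube. Telescoping `∏ α̃ - ∏ α` into `j`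
products with a single factor `α̃ - α` and integrating coordinatewise bounds the cube integral by
`j ‖α̃ - α‖₁ M^{j-1}` with `M = max(‖α‖₁, ‖α̃‖₁)`, and summing over `j` gives `β_σ ‖α̃ - α‖₁ e^M`.
-/

namespace Finset

lemma prod_ite_lt_ite_gt {ι M : Type*} [LinearOrder ι] [CommMonoid M] {s : Finset ι} {i : ι}
    (hi : i ∈ s) (u v w : ι → M) :
    ∏ j ∈ s, (if j < i then u j else if i < j then w j else v j) =
      (∏ j ∈ s with j < i, u j) * v i * ∏ j ∈ s with i < j, w j := by
  have hv : v i = ∏ j ∈ s, if j = i then v j else 1 := by rw [prod_ite_eq', if_pos hi]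
  rw [prod_filter, prod_filter, hv, ← prod_mul_distrib, ← prod_mul_distrib]
  refine prod_congr rfl fun j _ => ?_
  rcases lt_trichotomy j i with h | rfl | h
  · simp [h, h.ne, h.not_gt]
  · simp
  · simp [h, h.ne', h.not_gt]

lemma abs_prod_sub_prod_le {ι R : Type*} [Fintype ι] [LinearOrder ι] [CommRing R] [LinearOrder R]
    [IsStrictOrderedRing R] (b c : ι → R) :
    |∏ i, b i - ∏ i, c i| ≤
      ∑ i, ∏ j, (if j < i then |c j| else if i < j then |b j| else |b j - c j|) := by
  have h := prod_sub_ordered univ b (fun i => b i - c i)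
  simp only [sub_sub_cancel] at h
  rw [h, sub_sub_cancel]
  refine (abs_sum_le_sum_abs _ _).trans_eq (sum_congr rfl fun i _ => ?_)
  rw [prod_ite_lt_ite_gt (mem_univ i), abs_mul, abs_mul, abs_prod, abs_prod]
  ring

end Finset

lemma Tuple.eq_sort_of_strictMono_comp {α : Type*} [LinearOrder α] {n : ℕ} {f : Fin n → α}
    {π : Equiv.Perm (Fin n)} (h : StrictMono (f ∘ π)) : π = Tuple.sort f :=
  Tuple.eq_sort_iff.2 ⟨h.monotone, fun _ _ hij heq => absurd heq (h hij).ne⟩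

lemma integral_abs_prod_sub_prod_le {E : Type*} [MeasurableSpace E] {μ : Measure E}
    [SigmaFinite μ] {F G : E → ℝ} (hF : Integrable F μ) (hG : Integrable G μ) (n : ℕ) :
    ∫ x, |∏ i, G (x i) - ∏ i, F (x i)| ∂(Measure.pi fun _ : Fin n => μ) ≤
      n * (∫ t, |G t - F t| ∂μ) * max (∫ t, |F t| ∂μ) (∫ t, |G t| ∂μ) ^ (n - 1) := by
  classical
  set D := ∫ t, |G t - F t| ∂μ
  set M := max (∫ t, |F t| ∂μ) (∫ t, |G t| ∂μ)
  let φ : Fin n → Fin n → E → ℝ := fun i j t =>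
    if j < i then |F t| else if i < j then |G t| else |G t - F t|
  have hφ : ∀ i j, Integrable (φ i j) μ := fun i j => by
    simp only [φ]; split_ifs
    exacts [hF.abs, hG.abs, (hG.sub hF).abs]
  have hφ_le : ∀ i j, ∫ t, φ i j t ∂μ ≤ Function.update (fun _ => M) i D j := fun i j => by
    rcases lt_trichotomy j i with h | rfl | h
    · simp [φ, h, h.ne, M]
    · simp [φ, D]
    · simp [φ, h, h.ne', h.not_gt, M]
  have hprod : ∀ i, Integrable (fun x : Fin n → E => ∏ j, φ i j (x j))
      (Measure.pi fun _ => μ) := fun i => Integrable.fin_nat_prod (hφ i)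
  calc ∫ x, |∏ i, G (x i) - ∏ i, F (x i)| ∂(Measure.pi fun _ => μ)
      ≤ ∫ x, ∑ i, ∏ j, φ i j (x j) ∂(Measure.pi fun _ => μ) :=
        integral_mono ((Integrable.fin_nat_prod fun _ => hG).sub
          (Integrable.fin_nat_prod fun _ => hF)).abs (integrable_finsetSum _ fun i _ => hprod i)
          fun x => Finset.abs_prod_sub_prod_le (fun j => G (x j)) (fun j => F (x j))
    _ = ∑ i, ∏ j, ∫ t, φ i j t ∂μ := by
        rw [integral_finsetSum _ fun i _ => hprod i]
        exact Finset.sum_congr rfl fun i _ => integral_fin_nat_prod_eq_prod (φ i)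
    _ ≤ ∑ i : Fin n, ∏ j, Function.update (fun _ => M) i D j :=
        Finset.sum_le_sum fun i _ => Finset.prod_le_prod
          (fun j _ => integral_nonneg fun t => by simp only [φ]; split_ifs <;> positivity)
          fun j _ => hφ_le i j
    _ = n * D * M ^ (n - 1) := by
        simp only [Finset.mem_univ, Finset.prod_update_of_mem, Finset.prod_const, Finset.card_sdiff,
          Finset.card_univ, Fintype.card_fin, Finset.inter_univ, Finset.card_singleton,
          Finset.sum_const, nsmul_eq_mul]
        ring

lemma factorial_mul_setIntegral_le_integral {α : Type*} [MeasurableSpace α] [LinearOrder α]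
    {μ : Measure α} [SigmaFinite μ] {n : ℕ} {S : Set (Fin n → α)} (hS : MeasurableSet S)
    (hS_mono : ∀ s ∈ S, StrictMono s) {Φ : (Fin n → α) → ℝ}
    (hΦ : Integrable Φ (Measure.pi fun _ => μ)) (hΦ_nonneg : 0 ≤ Φ)
    (hΦ_perm : ∀ (π : Equiv.Perm (Fin n)) (s : Fin n → α), Φ (s ∘ π) = Φ s) :
    n.factorial * ∫ s in S, Φ s ∂(Measure.pi fun _ => μ) ≤ ∫ s, Φ s ∂(Measure.pi fun _ => μ) := by
  classical
  let T : Equiv.Perm (Fin n) → (Fin n → α) ≃ᵐ (Fin n → α) := fun π =>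
    (MeasurableEquiv.piCongrLeft (fun _ => α) π).symm
  have hT : ∀ π s, T π s = s ∘ π := fun π s => rfl
  have hT_pres : ∀ π, MeasurePreserving (T π) (Measure.pi fun _ => μ) (Measure.pi fun _ => μ) :=
    fun π => (measurePreserving_piCongrLeft (fun _ => μ) π).symm
  have h_eq : ∀ π, ∫ s in T π ⁻¹' S, Φ s ∂(Measure.pi fun _ => μ) =
      ∫ s in S, Φ s ∂(Measure.pi fun _ => μ) := fun π => by
    simpa only [hT, hΦ_perm] using
      (hT_pres π).setIntegral_preimage_emb (T π).measurableEmbedding Φ S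
  have h_disj : Set.PairwiseDisjoint (Finset.univ : Finset (Equiv.Perm (Fin n))) (T · ⁻¹' S) :=
    fun π _ π' _ hne => Set.disjoint_left.2 fun s hs hs' => hne <|
      (Tuple.eq_sort_of_strictMono_comp (hS_mono _ hs)).trans
        (Tuple.eq_sort_of_strictMono_comp (hS_mono _ hs')).symm
  calc n.factorial * ∫ s in S, Φ s ∂(Measure.pi fun _ => μ)
      = ∑ π : Equiv.Perm (Fin n), ∫ s in T π ⁻¹' S, Φ s ∂(Measure.pi fun _ => μ) := by
        simp [h_eq, Finset.card_univ, Fintype.card_perm]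
    _ = ∫ s in ⋃ π ∈ (Finset.univ : Finset (Equiv.Perm (Fin n))), T π ⁻¹' S,
          Φ s ∂(Measure.pi fun _ => μ) :=
        (integral_biUnion_finset _ (fun π _ => (T π).measurable hS) h_disj
          fun _ _ => hΦ.integrableOn).symm
    _ ≤ ∫ s, Φ s ∂(Measure.pi fun _ => μ) :=
        setIntegral_le_integral hΦ (Eventually.of_forall hΦ_nonneg)

lemma measurableSet_simplexSet (x0 x1 : ℝ) (n : ℕ) : MeasurableSet (simplexSet x0 x1 n) := by
  simp only [simplexSet, StrictMono, Set.ofPred_and, Set.ofPred_forall]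
  exact .inter (.iInter fun a => .iInter fun b => .iInter fun _ =>
    measurableSet_lt (measurable_pi_apply a) (measurable_pi_apply b))
    (.iInter fun ν => measurable_pi_apply ν measurableSet_Ioo)

lemma continuous_kappaFn (x0 : ℝ) (n : ℕ) : Continuous (kappaFn x0 n) := by
  unfold kappaFn
  fun_prop

lemma kappaFn_succ (x0 : ℝ) (n : ℕ) (s : Fin (n + 1) → ℝ) :
    kappaFn x0 (n + 1) s = (s (Fin.last n) - x0) - kappaFn x0 n (s ∘ Fin.castSucc) := by
  have hsign : ∀ ν : Fin n, (-1 : ℝ) ^ (n - (ν.castSucc : ℕ)) = -(-1) ^ (n - 1 - (ν : ℕ)) := by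
    intro ν
    rw [Fin.val_castSucc, show n - ν = n - 1 - ν + 1 by omega, pow_succ, mul_neg_one]
  simp only [kappaFn, Fin.sum_univ_castSucc, Nat.add_sub_cancel, hsign, Fin.val_last,
    Nat.sub_self, pow_zero, one_mul, neg_mul, Finset.sum_neg_distrib, Function.comp_apply,
    Nat.odd_add_one]
  split_ifs <;> ring

lemma kappaFn_mem_Icc {x0 b : ℝ} (hb : x0 ≤ b) {n : ℕ} {s : Fin n → ℝ} (hs : Monotone s)
    (hs_mem : ∀ ν, s ν ∈ Set.Icc x0 b) : kappaFn x0 n s ∈ Set.Icc 0 (b - x0) := by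
  induction n generalizing b with
  | zero => simpa [kappaFn] using hb
  | succ n ih =>
    have hlast := hs_mem (Fin.last n)
    have h := ih hlast.1 (hs.comp Fin.strictMono_castSucc.monotone)
      fun ν => ⟨(hs_mem _).1, hs (Fin.castSucc_lt_last ν).le⟩
    rw [kappaFn_succ]
    constructor <;> linarith [h.1, h.2, hlast.2]

lemma norm_exp_le_betaSigma {x0 x1 κ : ℝ} (hκ : κ ∈ Set.Icc 0 (x1 - x0)) (σ : ℂ) :
    ‖Complex.exp (2 * Complex.I * σ * κ)‖ ≤ betaSigma x0 x1 σ := by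
  have hre : (2 * Complex.I * σ * κ).re = -2 * σ.im * κ := by simp
  rw [Complex.norm_exp, hre, betaSigma]
  split_ifs with hσ
  · exact Real.exp_le_one_iff.2 (by nlinarith [hκ.1])
  · rw [abs_of_neg (not_le.1 hσ)]
    exact Real.exp_le_exp.2 (by nlinarith [hκ.1, hκ.2])

lemma norm_exp_kappaFn_le_betaSigma {x0 x1 : ℝ} (hx : x0 ≤ x1) (σ : ℂ) {n : ℕ} {s : Fin n → ℝ}
    (hs : s ∈ simplexSet x0 x1 n) :
    ‖Complex.exp (2 * Complex.I * σ * kappaFn x0 n s)‖ ≤ betaSigma x0 x1 σ :=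
  norm_exp_le_betaSigma
    (kappaFn_mem_Icc hx hs.1.monotone fun ν => Set.Ioo_subset_Icc_self (hs.2 ν)) σ

lemma betaSigma_pos (x0 x1 : ℝ) (σ : ℂ) : 0 < betaSigma x0 x1 σ := by
  unfold betaSigma
  split_ifs <;> positivity

lemma L1normOn_nonneg (x0 x1 : ℝ) (f : ℝ → ℝ) : 0 ≤ L1normOn x0 x1 f :=
  setIntegral_nonneg measurableSet_Ioo fun _ _ => abs_nonneg _

section Cterm

variable {x0 x1 : ℝ}

lemma Cterm_eq_setIntegral_indicator (f : ℝ → ℝ) (n : ℕ) (σ : ℂ) :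
    Cterm x0 x1 f n σ = ∫ s in simplexSet x0 x1 n,
      Complex.exp (2 * Complex.I * σ * kappaFn x0 n s) *
        ((∏ ν, (Set.Ioo x0 x1).indicator f (s ν) : ℝ) : ℂ) := by
  refine setIntegral_congr_fun (measurableSet_simplexSet x0 x1 n) fun s hs => ?_
  simp [Set.indicator_of_mem (hs.2 _)]

lemma integrableOn_exp_kappaFn_mul (hx : x0 ≤ x1) (σ : ℂ) {n : ℕ} {P : (Fin n → ℝ) → ℝ}
    (hP : Integrable P) :
    IntegrableOn (fun s => Complex.exp (2 * Complex.I * σ * kappaFn x0 n s) * (P s : ℂ))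
      (simplexSet x0 x1 n) := by
  refine hP.ofReal.integrableOn.bdd_mul (c := betaSigma x0 x1 σ) ?_
    (ae_restrict_of_forall_mem (measurableSet_simplexSet x0 x1 n) fun s hs =>
      norm_exp_kappaFn_le_betaSigma hx σ hs)
  have := continuous_kappaFn x0 n
  fun_prop

lemma L1normOn_eq_integral_indicator (f : ℝ → ℝ) :
    L1normOn x0 x1 f = ∫ t, |(Set.Ioo x0 x1).indicator f t| := by
  rw [L1normOn, ← integral_indicator measurableSet_Ioo]
  congr 1 with t
  by_cases ht : t ∈ Set.Ioo x0 x1 <;> simp [ht]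

lemma norm_Cterm_sub_le_setIntegral (hx : x0 ≤ x1) {f g : ℝ → ℝ}
    (hf : IntegrableOn f (Set.Ioo x0 x1)) (hg : IntegrableOn g (Set.Ioo x0 x1)) (n : ℕ) (σ : ℂ) :
    ‖Cterm x0 x1 g n σ - Cterm x0 x1 f n σ‖ ≤ betaSigma x0 x1 σ *
      ∫ s in simplexSet x0 x1 n,
        |∏ ν, (Set.Ioo x0 x1).indicator g (s ν) - ∏ ν, (Set.Ioo x0 x1).indicator f (s ν)| := by
  have hF := Integrable.fin_nat_prod (n := n) fun _ => hf.integrable_indicator measurableSet_Ioo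
  have hG := Integrable.fin_nat_prod (n := n) fun _ => hg.integrable_indicator measurableSet_Ioo
  rw [Cterm_eq_setIntegral_indicator, Cterm_eq_setIntegral_indicator,
    ← integral_sub (integrableOn_exp_kappaFn_mul hx σ hG) (integrableOn_exp_kappaFn_mul hx σ hF),
    ← integral_const_mul]
  refine norm_integral_le_of_norm_le ((hG.sub hF).abs.integrableOn.const_mul _)
    (ae_restrict_of_forall_mem (measurableSet_simplexSet x0 x1 n) fun s hs => ?_)
  rw [← mul_sub, norm_mul, ← Complex.ofReal_sub, Complex.norm_real, Real.norm_eq_abs]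
  exact mul_le_mul_of_nonneg_right (norm_exp_kappaFn_le_betaSigma hx σ hs) (abs_nonneg _)

lemma norm_Cterm_succ_sub_le (hx : x0 ≤ x1) {f g : ℝ → ℝ} (hf : IntegrableOn f (Set.Ioo x0 x1))
    (hg : IntegrableOn g (Set.Ioo x0 x1)) (n : ℕ) (σ : ℂ) :
    ‖Cterm x0 x1 g (n + 1) σ - Cterm x0 x1 f (n + 1) σ‖ ≤
      betaSigma x0 x1 σ * L1normOn x0 x1 (fun t => g t - f t) *
        max (L1normOn x0 x1 f) (L1normOn x0 x1 g) ^ n / n.factorial := by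
  have h_simplex := norm_Cterm_sub_le_setIntegral hx hf hg (n + 1) σ
  simp only [L1normOn_eq_integral_indicator, Set.indicator_sub]
  set F := (Set.Ioo x0 x1).indicator f
  set G := (Set.Ioo x0 x1).indicator g
  have hF : Integrable F := hf.integrable_indicator measurableSet_Ioo
  have hG : Integrable G := hg.integrable_indicator measurableSet_Ioo
  have h_cube := factorial_mul_setIntegral_le_integral
    (Φ := fun s => |∏ ν, G (s ν) - ∏ ν, F (s ν)|) (measurableSet_simplexSet x0 x1 (n + 1))
    (fun s hs => hs.1) ((Integrable.fin_nat_prod fun _ => hG).sub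
      (Integrable.fin_nat_prod fun _ => hF)).abs (fun s => abs_nonneg _) fun π s => by
        simp only [Function.comp_apply, Equiv.prod_comp π (fun ν => G (s ν)),
          Equiv.prod_comp π (fun ν => F (s ν))]
  have h_bound := integral_abs_prod_sub_prod_le hF hG (n + 1)
  rw [Nat.add_sub_cancel] at h_bound
  calc ‖Cterm x0 x1 g (n + 1) σ - Cterm x0 x1 f (n + 1) σ‖
      ≤ betaSigma x0 x1 σ * ((n + 1 : ℕ) * (∫ t, |G t - F t|) *
          max (∫ t, |F t|) (∫ t, |G t|) ^ n / (n + 1).factorial) := by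
        refine h_simplex.trans (mul_le_mul_of_nonneg_left ?_ (betaSigma_pos x0 x1 σ).le)
        rw [le_div_iff₀ (by positivity), mul_comm]
        exact h_cube.trans h_bound
    _ = _ := by
        rw [Nat.factorial_succ]
        push_cast
        field_simp

lemma summable_Cterm_succ (hx : x0 ≤ x1) {f : ℝ → ℝ}
    (hf : IntegrableOn f (Set.Ioo x0 x1)) (σ : ℂ) :
    Summable fun n => Cterm x0 x1 f (n + 1) σ := by
  refine .of_norm_bounded ((Real.summable_pow_div_factorial (L1normOn x0 x1 f)).mul_left
    (betaSigma x0 x1 σ * L1normOn x0 x1 f)) fun n => ?_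
  have h_zero : Cterm x0 x1 (fun _ => 0) (n + 1) σ = 0 := by simp [Cterm]
  have h_zero_norm : L1normOn x0 x1 (fun _ => 0) = 0 := by simp [L1normOn]
  have h := norm_Cterm_succ_sub_le hx integrableOn_zero hf n σ
  simpa [h_zero, h_zero_norm, max_eq_right (L1normOn_nonneg x0 x1 f), mul_div_assoc] using h

end Cterm

theorem hexp_lipschitz (x0 x1 : ℝ) (hx : x0 < x1) (α αt : ℝ → ℝ)
    (hα : IntegrableOn α (Set.Ioo x0 x1)) (hαt : IntegrableOn αt (Set.Ioo x0 x1))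
    (σ : ℂ) :
    ‖hexp x0 x1 αt σ - hexp x0 x1 α σ‖ ≤
      betaSigma x0 x1 σ * L1normOn x0 x1 (fun t => αt t - α t) *
        Real.exp (max (L1normOn x0 x1 α) (L1normOn x0 x1 αt)) := by
  have h_major := (NormedSpace.expSeries_div_hasSum_exp
    (max (L1normOn x0 x1 α) (L1normOn x0 x1 αt))).mul_left
      (betaSigma x0 x1 σ * L1normOn x0 x1 (fun t => αt t - α t))
  simp only [← mul_div_assoc, ← Real.exp_eq_exp_ℝ] at h_major
  calc ‖hexp x0 x1 αt σ - hexp x0 x1 α σ‖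
      = ‖∑' n, (Cterm x0 x1 αt (n + 1) σ - Cterm x0 x1 α (n + 1) σ)‖ := by
        rw [hexp, hexp, add_sub_add_left_eq_sub,
          (summable_Cterm_succ hx.le hαt σ).tsum_sub (summable_Cterm_succ hx.le hα σ)]
    _ ≤ _ := tsum_of_norm_bounded h_major (norm_Cterm_succ_sub_le hx.le hα hαt · σ)
end

section
/- With notation as in the OPUC matrix product, for |z| = 1 one has Re( Ψ*_{n,n}(z) · conj(Φ*_{n,n}(z)) ) = ∏_{j=1}^n (1 − r_{n,j}²), and consequently |Ψ*_{n,n}(z) + Φ*_{n,n}(z)|² ≥ 2∏_{j=1}^n (1 − r_{n,j}²) on the unit circle. -/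
/-!
Evaluate the transfer matrices at a point `z` of the unit circle, where `conj z = z⁻¹`.
Right multiplication by `[[z, c z], [c, 1]]` with real `c` preserves the reversal relations
`A₀₀ = z^k conj A₀₁` and `A₁₀ = -z^k conj A₁₁` (with `k` raised by one), and these hold
for `M₀` with `k = 0`. For a matrix satisfying them, `det A = z^k · 2 Re (A₀₁ conj A₁₁)`, while
multiplicativity of the determinant gives `det = 2 z^n ∏ (1 - r_k²)`; cancelling `z^n` gives the
identity. The inequality follows from `|a + b|² = |a|² + |b|² + 2 Re (a conj b)`.
-/

open Polynomial

/-- The transfer matrix M_{n,k}(z) = [[z, z r],[r, 1]] with recursion coefficient r. -/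
noncomputable def opucStep (c : ℝ) : Matrix (Fin 2) (Fin 2) (Polynomial ℂ) :=
  !![Polynomial.X, Polynomial.C (c : ℂ) * Polynomial.X; Polynomial.C (c : ℂ), 1]

/-- The ordered product M₀ M_{n,1} ⋯ M_{n,j}, with M₀ = [[1,1],[−1,1]]. -/
noncomputable def opucProd (n : ℕ) (r : Fin n → ℝ) (j : ℕ) (hj : j ≤ n) :
    Matrix (Fin 2) (Fin 2) (Polynomial ℂ) :=
  (!![1, 1; -1, 1] : Matrix (Fin 2) (Fin 2) (Polynomial ℂ)) *
    (List.ofFn (fun k : Fin j => opucStep (r (Fin.castLE hj k)))).prod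

/-- Φ_{n,j}: the (monic) orthogonal polynomial. -/
noncomputable def PhiP (n : ℕ) (r : Fin n → ℝ) (j : ℕ) (hj : j ≤ n) : Polynomial ℂ :=
  -((opucProd n r j hj) 1 0)

/-- Φ*_{n,j}: the dual polynomial. -/
noncomputable def PhiStarP (n : ℕ) (r : Fin n → ℝ) (j : ℕ) (hj : j ≤ n) : Polynomial ℂ :=
  (opucProd n r j hj) 1 1

/-- Ψ_{n,j}: second-kind polynomial. -/
noncomputable def PsiP (n : ℕ) (r : Fin n → ℝ) (j : ℕ) (hj : j ≤ n) : Polynomial ℂ :=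
  (opucProd n r j hj) 0 0

/-- Ψ*_{n,j}: dual second-kind polynomial. -/
noncomputable def PsiStarP (n : ℕ) (r : Fin n → ℝ) (j : ℕ) (hj : j ≤ n) : Polynomial ℂ :=
  (opucProd n r j hj) 0 1

open ComplexConjugate

namespace Opuc

noncomputable def stepMatrix (z : ℂ) (c : ℝ) : Matrix (Fin 2) (Fin 2) ℂ :=
  !![z, c * z; c, 1]

theorem opucStep_map_eval (z : ℂ) (c : ℝ) :
    (opucStep c).map (eval z) = stepMatrix z c := by
  ext i j
  fin_cases i <;> fin_cases j <;> simp [opucStep, stepMatrix]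

theorem opucProd_map_eval (n : ℕ) (r : Fin n → ℝ) (j : ℕ) (hj : j ≤ n) (z : ℂ) :
    (opucProd n r j hj).map (eval z) =
      !![1, 1; -1, 1] * (List.ofFn fun k : Fin j => stepMatrix z (r (Fin.castLE hj k))).prod := by
  change (evalRingHom z).mapMatrix _ = _
  rw [opucProd, map_mul, map_list_prod, List.map_ofFn]
  congr 1
  · ext i j
    fin_cases i <;> fin_cases j <;> simp
  · exact congrArg _ (congrArg _ (funext fun k => opucStep_map_eval z _))

theorem det_stepMatrix (z : ℂ) (c : ℝ) : (stepMatrix z c).det = z * (1 - (c : ℂ) ^ 2) := by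
  rw [stepMatrix, Matrix.det_fin_two_of]
  ring

theorem det_mul_prod_stepMatrix (z : ℂ) {n : ℕ} (r : Fin n → ℝ) :
    (!![1, 1; -1, 1] * (List.ofFn fun k => stepMatrix z (r k)).prod).det =
      z ^ n * (2 * ∏ k, (1 - r k ^ 2) : ℝ) := by
  rw [Matrix.det_mul, ← Matrix.coe_detMonoidHom, map_list_prod, List.map_ofFn, List.prod_ofFn]
  simp only [Function.comp_apply, Matrix.coe_detMonoidHom, det_stepMatrix,
    Finset.prod_mul_distrib, Finset.prod_const, Finset.card_univ, Fintype.card_fin,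
    Matrix.det_fin_two_of]
  push_cast
  ring

/-- The reversal relations `Ψ = z^k conj Ψ*`, `Φ = z^k conj Φ*` for `[[Ψ, Ψ*], [-Φ, Φ*]]`. -/
def IsReversed (z : ℂ) (k : ℕ) (A : Matrix (Fin 2) (Fin 2) ℂ) : Prop :=
  A 0 0 = z ^ k * conj (A 0 1) ∧ A 1 0 = -(z ^ k * conj (A 1 1))

theorem isReversed_zero (z : ℂ) : IsReversed z 0 !![1, 1; -1, 1] := by
  simp [IsReversed]

theorem IsReversed.mul_stepMatrix {z : ℂ} (hz : ‖z‖ = 1) {k : ℕ}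
    {A : Matrix (Fin 2) (Fin 2) ℂ} (hA : IsReversed z k A) (c : ℝ) : IsReversed z (k + 1) (A * stepMatrix z c) := by
  have hz1 : z * conj z = 1 := by
    rw [Complex.mul_conj', hz, Complex.ofReal_one, one_pow]
  obtain ⟨h0, h1⟩ := hA
  simp only [IsReversed, stepMatrix, Matrix.mul_apply, Fin.sum_univ_two, Matrix.of_apply,
    Matrix.cons_val', Matrix.cons_val_zero, Matrix.cons_val_one, Matrix.empty_val',
    Matrix.cons_val_fin_one, map_add, map_mul, map_one, Complex.conj_ofReal, h0, h1, map_neg,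
    map_pow, Complex.conj_conj, pow_succ]
  have hzk : (z * conj z) ^ (k + 1) = 1 := by rw [hz1, one_pow]
  constructor
  · linear_combination (-(A 0 1 * c)) * hzk
  · linear_combination (-(A 1 1 * c)) * hzk

theorem isReversed_mul_prod_stepMatrix {z : ℂ} (hz : ‖z‖ = 1) (l : List ℝ) :
    IsReversed z l.length (!![1, 1; -1, 1] * (l.map (stepMatrix z)).prod) := by
  induction l using List.reverseRecOn with
  | nil => simpa using isReversed_zero z
  | append_singleton l c ih =>
    simpa [← Matrix.mul_assoc] using ih.mul_stepMatrix hz c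

theorem IsReversed.det_eq {z : ℂ} {k : ℕ} {A : Matrix (Fin 2) (Fin 2) ℂ}
    (hA : IsReversed z k A) : A.det = z ^ k * (2 * (A 0 1 * conj (A 1 1)).re : ℝ) := by
  rw [Matrix.det_fin_two, hA.1, hA.2, Complex.ofReal_mul, Complex.re_eq_add_conj]
  simp only [map_mul, Complex.conj_conj]
  push_cast
  ring

end Opuc

open Opuc in
theorem opuc_real_part_product_general (n : ℕ) (r : Fin n → ℝ) :
    ∀ z : ℂ, ‖z‖ = 1 →
      (((PsiStarP n r n le_rfl).eval z * (starRingEnd ℂ) ((PhiStarP n r n le_rfl).eval z)).re =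
        (∏ k : Fin n, (1 - (r k) ^ 2))) ∧
      2 * (∏ k : Fin n, (1 - (r k) ^ 2)) ≤
        ‖(PsiStarP n r n le_rfl).eval z + (PhiStarP n r n le_rfl).eval z‖ ^ 2 := by
  intro z hz
  have hA : (opucProd n r n le_rfl).map (eval z) =
      !![1, 1; -1, 1] * (List.ofFn fun k => stepMatrix z (r k)).prod := by
    simp only [opucProd_map_eval, Fin.castLE_refl]
  have hrev := isReversed_mul_prod_stepMatrix hz (List.ofFn r)
  rw [List.length_ofFn, List.map_ofFn, Function.comp_def, ← hA] at hrev
  have hdet : ((opucProd n r n le_rfl).map (eval z)).det =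
      z ^ n * (2 * ∏ k, (1 - r k ^ 2) : ℝ) := by
    rw [hA, det_mul_prod_stepMatrix]
  rw [hrev.det_eq] at hdet
  have hre : ((PsiStarP n r n le_rfl).eval z * conj ((PhiStarP n r n le_rfl).eval z)).re =
      ∏ k, (1 - r k ^ 2) := by
    have := mul_left_cancel₀ (pow_ne_zero n (norm_ne_zero_iff.mp (hz ▸ one_ne_zero))) hdet
    exact (mul_right_inj' two_ne_zero).mp (Complex.ofReal_injective this)
  refine ⟨hre, ?_⟩
  rw [Complex.sq_norm, Complex.normSq_add, hre]
  linarith [Complex.normSq_nonneg ((PsiStarP n r n le_rfl).eval z),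
    Complex.normSq_nonneg ((PhiStarP n r n le_rfl).eval z)]

theorem opuc_real_part_product (n : ℕ) (r : Fin n → ℝ) (hr : ∀ k, |r k| < 1) :
    ∀ z : ℂ, ‖z‖ = 1 →
      (((PsiStarP n r n le_rfl).eval z * (starRingEnd ℂ) ((PhiStarP n r n le_rfl).eval z)).re =
        (∏ k : Fin n, (1 - (r k) ^ 2))) ∧
      2 * (∏ k : Fin n, (1 - (r k) ^ 2)) ≤
        ‖(PsiStarP n r n le_rfl).eval z + (PhiStarP n r n le_rfl).eval z‖ ^ 2 :=
  opuc_real_part_product_general n r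
end
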